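/- arXiv:2009.04055 — 5 statements merged into one kernel-verified Lean document; each statement's English description precedes it below -/
import Mathlib

section
/- Let V be a countably infinite dimensional K-vector space with basis (b_i)_{i∈ℤ⁺}, and let f be an endomorphism of V whose matrix with respect to this basis is row and column finite. If the image of f is finite dimensional, then the matrix of f has only finitely many nonzero entries. -/
/-! The range of `f` is finitely generated, so every column `f bⱼ` is supported on one finite
set of rows; there are thus finitely many nonzero rows, each with finitely many nonzero entries. -/

open Finsupp

theorem Submodule.FG.exists_finite_le_supported {R M α : Type*} [Semiring R] [AddCommMonoid M]
    [Module R M] {p : Submodule R (α →₀ M)} (hp : p.FG) :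
    ∃ s : Set α, s.Finite ∧ p ≤ supported M R s := by
  obtain ⟨t, rfl⟩ := hp
  refine ⟨⋃ x ∈ (t : Set (α →₀ M)), x.support, ?_,
    span_le_supported_biUnion_support (R := R) (t : Set (α →₀ M))⟩
  exact t.finite_toSet.biUnion fun x _ => x.support.finite_toSet

theorem LinearMap.finite_setOf_apply_single_ne_zero {R M α β : Type*} [Semiring R]
    [AddCommMonoid M] [Module R M] (f : (α →₀ R) →ₗ[R] (β →₀ M))
    (hrow : ∀ i, {j | f (Finsupp.single j 1) i ≠ 0}.Finite) (hrange : (range f).FG) :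
    {p : β × α | f (Finsupp.single p.2 1) p.1 ≠ 0}.Finite := by
  obtain ⟨s, hs, hle⟩ := hrange.exists_finite_le_supported
  refine Set.Finite.of_finite_fibers Prod.fst (hs.subset ?_) fun i _ => ?_
  · rintro _ ⟨⟨i, j⟩, hij, rfl⟩
    exact hle (mem_range_self f (Finsupp.single j 1)) (mem_support_iff.mpr hij)
  · refine ((hrow i).image (Prod.mk i)).subset ?_
    rintro ⟨i', j⟩ ⟨hij, rfl : i' = i⟩
    exact ⟨j, hij, rfl⟩

theorem finite_rank_rcfm_has_finitely_many_entries_general {K : Type*} [Field K]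
    (f : Module.End K (ℕ →₀ K))
    (hrow : ∀ i : ℕ, {j : ℕ | f (Finsupp.single j 1) i ≠ 0}.Finite)
    (hfin : FiniteDimensional K (LinearMap.range f)) :
    {p : ℕ × ℕ | f (Finsupp.single p.2 1) p.1 ≠ 0}.Finite :=
  f.finite_setOf_apply_single_ne_zero hrow ((Submodule.fg_iff_finiteDimensional _).mpr hfin)

/-- Let `V = ℕ →₀ K` with its standard basis `(bᵢ)`, and let `f` be an
endomorphism of `V` whose matrix `(i, j) ↦ f(bⱼ)ᵢ` with respect to this basis is row and column
finite.  If the image of `f` is finite dimensional, then the matrix of `f` has only finitely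
many nonzero entries. -/
theorem finite_rank_rcfm_has_finitely_many_entries {K : Type*} [Field K]
    (f : Module.End K (ℕ →₀ K))
    (hrow : ∀ i : ℕ, {j : ℕ | f (Finsupp.single j 1) i ≠ 0}.Finite)
    (hcol : ∀ j : ℕ, {i : ℕ | f (Finsupp.single j 1) i ≠ 0}.Finite)
    (hfin : FiniteDimensional K (LinearMap.range f)) :
    {p : ℕ × ℕ | f (Finsupp.single p.2 1) p.1 ≠ 0}.Finite :=
  finite_rank_rcfm_has_finitely_many_entries_general f hrow hfin
end

section
/- Let E be a unital K-algebra containing a complete family of matrix units {E_{ij} : i,j ∈ ℤ⁺} spanning an ideal isomorphic to M_∞(K). Define φ : E → B(K) by sending a to the matrix whose (i,j) entry is the scalar c with E_{ii} a E_{jj} = c E_{ij}. Then φ is a K-algebra homomorphism whose image lies in the row-and-column-finite matrices, and φ restricted to the span of the E_{ij} agrees with the standard identification E_{ij} ↦ e_{ij}. -/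
/-!
Every identity about the coefficients `c a i j` is checked on the corner `E i i * _ * E j j`:
since `E i j ≠ 0` and `K` is a field, the scalar `r` with `E i i * x * E j j = r • E i j` is
unique. An element of the span of the matrix units is the finite combination of the `E i j` with
its own coefficients, so `E i i * a = ∑ₖ c a i k • E i k` is a finite sum; this gives row
finiteness and, after multiplying by `b * E j j`, the product rule. Columns are symmetric.
-/

namespace MatrixUnits

variable {K A : Type*} [Field K] [Ring A] [Algebra K A] {E : ℕ → ℕ → A} {c : A → ℕ → ℕ → K}

theorem coeff_eq_of_corner_eq (hne : ∀ i j, E i j ≠ 0)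
    (hc : ∀ a i j, E i i * a * E j j = c a i j • E i j) {a : A} {i j : ℕ} {r : K}
    (h : E i i * a * E j j = r • E i j) : c a i j = r :=
  smul_left_injective K (hne i j) ((hc a i j).symm.trans h)

theorem corner_finsupp_sum (hrel : ∀ i j k l, E i j * E k l = if j = k then E i l else 0)
    (f : ℕ × ℕ →₀ K) (k l : ℕ) :
    E k k * (f.sum fun p r => r • E p.1 p.2) * E l l = f (k, l) • E k l := by
  have hterm : ∀ (p : ℕ × ℕ) (r : K),
      E k k * (r • E p.1 p.2) * E l l = if p = (k, l) then r • E k l else 0 := by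
    rintro ⟨m, n⟩ r
    rw [mul_smul_comm, smul_mul_assoc, hrel]
    by_cases hm : k = m
    · subst hm
      by_cases hn : n = l <;> simp [hrel, hn]
    · simp [hm, Ne.symm hm]
  rw [Finsupp.mul_sum, Finsupp.sum_mul]
  simp only [hterm]
  rw [Finsupp.sum_ite_eq']
  split_ifs with hkl
  · rfl
  · rw [Finsupp.notMem_support_iff.mp hkl, zero_smul]

theorem exists_finsupp_coeff_of_mem_span
    (hrel : ∀ i j k l, E i j * E k l = if j = k then E i l else 0) (hne : ∀ i j, E i j ≠ 0)
    (hc : ∀ a i j, E i i * a * E j j = c a i j • E i j) {x : A}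
    (hx : x ∈ Submodule.span K (Set.range fun p : ℕ × ℕ => E p.1 p.2)) :
    ∃ f : ℕ × ℕ →₀ K, (∀ p, f p = c x p.1 p.2) ∧ (f.sum fun p r => r • E p.1 p.2) = x := by
  obtain ⟨f, rfl⟩ := Finsupp.mem_span_range_iff_exists_finsupp.mp hx
  exact ⟨f, fun p => (coeff_eq_of_corner_eq hne hc (corner_finsupp_sum hrel f p.1 p.2)).symm, rfl⟩

theorem finite_coeff_support_of_mem_span
    (hrel : ∀ i j k l, E i j * E k l = if j = k then E i l else 0) (hne : ∀ i j, E i j ≠ 0)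
    (hc : ∀ a i j, E i i * a * E j j = c a i j • E i j) {x : A}
    (hx : x ∈ Submodule.span K (Set.range fun p : ℕ × ℕ => E p.1 p.2)) :
    {p : ℕ × ℕ | c x p.1 p.2 ≠ 0}.Finite := by
  obtain ⟨f, hf, -⟩ := exists_finsupp_coeff_of_mem_span hrel hne hc hx
  refine f.support.finite_toSet.subset fun p hp => ?_
  simpa [hf] using hp

theorem eq_sum_coeff_of_mem_span
    (hrel : ∀ i j k l, E i j * E k l = if j = k then E i l else 0) (hne : ∀ i j, E i j ≠ 0)
    (hc : ∀ a i j, E i i * a * E j j = c a i j • E i j) {x : A}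
    (hx : x ∈ Submodule.span K (Set.range fun p : ℕ × ℕ => E p.1 p.2)) {s : Finset (ℕ × ℕ)}
    (hs : ∀ p : ℕ × ℕ, c x p.1 p.2 ≠ 0 → p ∈ s) :
    x = ∑ p ∈ s, c x p.1 p.2 • E p.1 p.2 := by
  obtain ⟨f, hf, hfx⟩ := exists_finsupp_coeff_of_mem_span hrel hne hc hx
  calc x = f.sum fun p r => r • E p.1 p.2 := hfx.symm
    _ = ∑ p ∈ s, f p • E p.1 p.2 :=
      Finsupp.sum_of_support_subset f (fun p hp => hs p (by simpa [hf] using hp)) _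
        (fun _ _ => zero_smul K _)
    _ = ∑ p ∈ s, c x p.1 p.2 • E p.1 p.2 := by simp only [hf]

theorem coeff_diag_mul (hrel : ∀ i j k l, E i j * E k l = if j = k then E i l else 0)
    (hne : ∀ i j, E i j ≠ 0) (hc : ∀ a i j, E i i * a * E j j = c a i j • E i j)
    (a : A) (i k l : ℕ) : c (E i i * a) k l = if k = i then c a i l else 0 := by
  refine coeff_eq_of_corner_eq hne hc ?_
  rw [← mul_assoc, hrel]
  split_ifs with hki
  · rw [hki, hc]
  · rw [zero_mul, zero_mul, zero_smul]

theorem coeff_mul_diag (hrel : ∀ i j k l, E i j * E k l = if j = k then E i l else 0)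
    (hne : ∀ i j, E i j ≠ 0) (hc : ∀ a i j, E i i * a * E j j = c a i j • E i j)
    (a : A) (j k l : ℕ) : c (a * E j j) k l = if l = j then c a k j else 0 := by
  refine coeff_eq_of_corner_eq hne hc ?_
  rw [← mul_assoc, mul_assoc (E k k * a), hrel]
  by_cases hjl : j = l
  · subst hjl
    simp [hc]
  · simp [hjl, Ne.symm hjl]

theorem finite_row_support (hrel : ∀ i j k l, E i j * E k l = if j = k then E i l else 0)
    (hne : ∀ i j, E i j ≠ 0)
    (hspanr : ∀ (a : A) (i : ℕ),
      E i i * a ∈ Submodule.span K (Set.range fun p : ℕ × ℕ => E p.1 p.2))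
    (hc : ∀ a i j, E i i * a * E j j = c a i j • E i j) (a : A) (i : ℕ) :
    {j : ℕ | c a i j ≠ 0}.Finite := by
  refine ((finite_coeff_support_of_mem_span hrel hne hc (hspanr a i)).image Prod.snd).subset
    fun j hj => ⟨(i, j), ?_, rfl⟩
  simpa [coeff_diag_mul hrel hne hc] using hj

theorem finite_col_support (hrel : ∀ i j k l, E i j * E k l = if j = k then E i l else 0)
    (hne : ∀ i j, E i j ≠ 0)
    (hspanl : ∀ (a : A) (j : ℕ),
      a * E j j ∈ Submodule.span K (Set.range fun p : ℕ × ℕ => E p.1 p.2))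
    (hc : ∀ a i j, E i i * a * E j j = c a i j • E i j) (a : A) (j : ℕ) :
    {i : ℕ | c a i j ≠ 0}.Finite := by
  refine ((finite_coeff_support_of_mem_span hrel hne hc (hspanl a j)).image Prod.fst).subset
    fun i hi => ⟨(i, j), ?_, rfl⟩
  simpa [coeff_mul_diag hrel hne hc] using hi

theorem diag_mul_eq_sum (hrel : ∀ i j k l, E i j * E k l = if j = k then E i l else 0)
    (hne : ∀ i j, E i j ≠ 0)
    (hspanr : ∀ (a : A) (i : ℕ),
      E i i * a ∈ Submodule.span K (Set.range fun p : ℕ × ℕ => E p.1 p.2))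
    (hc : ∀ a i j, E i i * a * E j j = c a i j • E i j) (a : A) (i : ℕ) {T : Finset ℕ}
    (hT : ∀ k, c a i k ≠ 0 → k ∈ T) :
    E i i * a = ∑ k ∈ T, c a i k • E i k := by
  have hsupp : ∀ p : ℕ × ℕ, c (E i i * a) p.1 p.2 ≠ 0 → p ∈ {i} ×ˢ T := by
    rintro ⟨k, l⟩ hkl
    rw [coeff_diag_mul hrel hne hc] at hkl
    split_ifs at hkl with hki
    · exact Finset.mem_product.mpr ⟨Finset.mem_singleton.mpr hki, hT l hkl⟩
    · exact absurd rfl hkl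
  rw [eq_sum_coeff_of_mem_span hrel hne hc (hspanr a i) hsupp, Finset.sum_product,
    Finset.sum_singleton]
  simp only [coeff_diag_mul hrel hne hc, if_pos]

theorem unit_mul_mul_diag (hrel : ∀ i j k l, E i j * E k l = if j = k then E i l else 0)
    (hc : ∀ a i j, E i i * a * E j j = c a i j • E i j) (b : A) (i j k : ℕ) :
    E i k * b * E j j = c b k j • E i j := by
  have hEik : E i k = E i k * E k k := by simp [hrel]
  rw [hEik, mul_assoc (E i k) (E k k) b, mul_assoc (E i k) (E k k * b), hc, mul_smul_comm, hrel, if_pos rfl]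

theorem coeff_mul (hrel : ∀ i j k l, E i j * E k l = if j = k then E i l else 0)
    (hne : ∀ i j, E i j ≠ 0)
    (hspanr : ∀ (a : A) (i : ℕ),
      E i i * a ∈ Submodule.span K (Set.range fun p : ℕ × ℕ => E p.1 p.2))
    (hc : ∀ a i j, E i i * a * E j j = c a i j • E i j) (a b : A) (i j : ℕ) :
    c (a * b) i j = ∑ᶠ k, c a i k * c b k j := by
  set T := (finite_row_support hrel hne hspanr hc a i).toFinset
  have hT : ∀ k, c a i k ≠ 0 → k ∈ T := fun k hk => by simpa [T] using hk
  rw [finsum_eq_sum_of_support_subset _ fun k hk => hT k (left_ne_zero_of_mul hk)]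
  refine coeff_eq_of_corner_eq hne hc ?_
  rw [← mul_assoc, diag_mul_eq_sum hrel hne hspanr hc a i hT, Finset.sum_mul, Finset.sum_mul,
    Finset.sum_smul]
  refine Finset.sum_congr rfl fun k _ => ?_
  rw [smul_mul_assoc, smul_mul_assoc, unit_mul_mul_diag hrel hc, smul_smul]

theorem coeff_add (hne : ∀ i j, E i j ≠ 0) (hc : ∀ a i j, E i i * a * E j j = c a i j • E i j)
    (a b : A) (i j : ℕ) : c (a + b) i j = c a i j + c b i j :=
  coeff_eq_of_corner_eq hne hc (by rw [mul_add, add_mul, hc, hc, add_smul])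

theorem coeff_smul (hne : ∀ i j, E i j ≠ 0) (hc : ∀ a i j, E i i * a * E j j = c a i j • E i j)
    (r : K) (a : A) (i j : ℕ) : c (r • a) i j = r * c a i j :=
  coeff_eq_of_corner_eq hne hc (by rw [mul_smul_comm, smul_mul_assoc, hc, smul_smul])

theorem coeff_one (hrel : ∀ i j k l, E i j * E k l = if j = k then E i l else 0)
    (hne : ∀ i j, E i j ≠ 0) (hc : ∀ a i j, E i i * a * E j j = c a i j • E i j) (i j : ℕ) :
    c 1 i j = if i = j then 1 else 0 :=
  coeff_eq_of_corner_eq hne hc (by rw [mul_one, hrel, ite_smul, one_smul, zero_smul])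

theorem coeff_matrixUnit (hrel : ∀ i j k l, E i j * E k l = if j = k then E i l else 0)
    (hne : ∀ i j, E i j ≠ 0) (hc : ∀ a i j, E i i * a * E j j = c a i j • E i j)
    (k l i j : ℕ) : c (E k l) i j = if i = k ∧ j = l then 1 else 0 := by
  refine coeff_eq_of_corner_eq hne hc ?_
  by_cases hik : i = k
  · subst hik
    by_cases hjl : j = l
    · subst hjl
      simp [hrel]
    · simp [hrel, hjl, Ne.symm hjl]
  · simp [hrel, hik]

end MatrixUnits

/-- Let `E` be a unital `K`-algebra containing a family of matrix units
`{E i j : i, j ∈ ℕ}` (nonzero, satisfying `E i j * E k l = δ_{jk} E i l`) spanning an ideal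
isomorphic to `M_∞(K)` (each `a * E j j` and `E i i * a` lies in the span of the matrix units).
Let `c a i j` be the scalar with `E i i * a * E j j = (c a i j) • E i j`; it is the `(i,j)` entry
of the map `φ : a ↦ (c a i j)`.  Then `φ` is a `K`-algebra homomorphism into the
row-and-column-finite matrices, and on the matrix units it agrees with the standard
identification `E k l ↦ e k l`. -/
theorem entry_map_is_algebra_hom {K A : Type*} [Field K] [Ring A] [Algebra K A]
    (E : ℕ → ℕ → A)
    (hrel : ∀ i j k l : ℕ, E i j * E k l = if j = k then E i l else 0)
    (hne : ∀ i j : ℕ, E i j ≠ 0)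
    (hspanl : ∀ (a : A) (j : ℕ),
      a * E j j ∈ Submodule.span K (Set.range fun p : ℕ × ℕ => E p.1 p.2))
    (hspanr : ∀ (a : A) (i : ℕ),
      E i i * a ∈ Submodule.span K (Set.range fun p : ℕ × ℕ => E p.1 p.2))
    (c : A → ℕ → ℕ → K)
    (hc : ∀ (a : A) (i j : ℕ), E i i * a * E j j = c a i j • E i j) :
    (∀ (a : A) (i : ℕ), {j : ℕ | c a i j ≠ 0}.Finite) ∧
    (∀ (a : A) (j : ℕ), {i : ℕ | c a i j ≠ 0}.Finite) ∧
    (∀ (a b : A) (i j : ℕ), c (a * b) i j = ∑ᶠ k : ℕ, c a i k * c b k j) ∧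
    (∀ (a b : A) (i j : ℕ), c (a + b) i j = c a i j + c b i j) ∧
    (∀ (r : K) (a : A) (i j : ℕ), c (r • a) i j = r * c a i j) ∧
    (∀ i j : ℕ, c 1 i j = if i = j then 1 else 0) ∧
    (∀ k l i j : ℕ, c (E k l) i j = if i = k ∧ j = l then 1 else 0) :=
  ⟨MatrixUnits.finite_row_support hrel hne hspanr hc,
    MatrixUnits.finite_col_support hrel hne hspanl hc,
    MatrixUnits.coeff_mul hrel hne hspanr hc,
    MatrixUnits.coeff_add hne hc,
    MatrixUnits.coeff_smul hne hc,
    MatrixUnits.coeff_one hrel hne hc,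
    MatrixUnits.coeff_matrixUnit hrel hne hc⟩
end

section
/- If S is a linear endomorphism of a vector space V with finite dimensional image, then the kernel of I - S and the cokernel V/(I-S)V of I - S are finite dimensional and have equal dimension; in particular ind(I - S) = 0. -/
/-!
`1 - S` agrees with the identity modulo the finite-dimensional subspace `W = range S`. Hence it
maps `W` into itself, its kernel lies in `W`, and its cokernel is a quotient of `W`; so kernel
and cokernel are those of the restriction of `1 - S` to `W`, an endomorphism of a
finite-dimensional space, whose index vanishes by rank-nullity.
-/

namespace LinearMap

variable {R M : Type*} [Ring R] [AddCommGroup M] [Module R M] {f : Module.End R M}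
  {W : Submodule R M}

theorem apply_mem_of_forall_sub_apply_mem (hf : ∀ x, x - f x ∈ W) {x : M} (hx : x ∈ W) :
    f x ∈ W := by
  simpa using W.sub_mem hx (hf x)

theorem mem_of_forall_sub_apply_mem (hf : ∀ x, x - f x ∈ W) {x : M} (hx : f x ∈ W) :
    x ∈ W := by
  simpa using W.add_mem (hf x) hx

theorem ker_le_of_forall_sub_apply_mem (hf : ∀ x, x - f x ∈ W) : ker f ≤ W :=
  fun _ hx => mem_of_forall_sub_apply_mem hf (by simp [mem_ker.mp hx])

noncomputable def kerRestrictEquivOfForallSubApplyMem (hf : ∀ x, x - f x ∈ W) :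
    ker (f.restrict fun _ => apply_mem_of_forall_sub_apply_mem hf) ≃ₗ[R] ker f :=
  (LinearEquiv.ofEq _ _ (ker_restrict _)).trans
    (Submodule.comapSubtypeEquivOfLe (ker_le_of_forall_sub_apply_mem hf))

theorem surjective_mkQ_comp_subtype_of_forall_sub_apply_mem (hf : ∀ x, x - f x ∈ W) :
    Function.Surjective ((range f).mkQ ∘ₗ W.subtype) := by
  intro y
  obtain ⟨x, rfl⟩ := (range f).mkQ_surjective y
  refine ⟨⟨x - f x, hf x⟩, (Submodule.Quotient.eq _).mpr ?_⟩
  simp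

theorem ker_mkQ_comp_subtype_of_forall_sub_apply_mem (hf : ∀ x, x - f x ∈ W) :
    ker ((range f).mkQ ∘ₗ W.subtype) =
      range (f.restrict fun _ => apply_mem_of_forall_sub_apply_mem hf) := by
  ext ⟨y, hy⟩
  simp only [ker_comp, Submodule.ker_mkQ, Submodule.mem_comap, Submodule.subtype_apply]
  constructor
  · rintro ⟨x, rfl⟩
    exact ⟨⟨x, mem_of_forall_sub_apply_mem hf hy⟩, rfl⟩
  · rintro ⟨x, hx⟩
    exact ⟨x, congrArg Subtype.val hx⟩

noncomputable def quotientRangeRestrictEquivOfForallSubApplyMem (hf : ∀ x, x - f x ∈ W) :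
    (W ⧸ range (f.restrict fun _ => apply_mem_of_forall_sub_apply_mem hf)) ≃ₗ[R]
      M ⧸ range f :=
  (Submodule.quotEquivOfEq _ _ (ker_mkQ_comp_subtype_of_forall_sub_apply_mem hf).symm).trans
    (quotKerEquivOfSurjective _ (surjective_mkQ_comp_subtype_of_forall_sub_apply_mem hf))

theorem finrank_ker_eq_finrank_quotient_range {K V : Type*} [Field K] [AddCommGroup V]
    [Module K V] [FiniteDimensional K V] (g : Module.End K V) :
    Module.finrank K (ker g) = Module.finrank K (V ⧸ range g) := by
  have h := g.index_eq_of_finiteDimensional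
  rw [index_eq_finrank_sub, sub_self] at h
  omega

end LinearMap

open LinearMap in
/-- If `S` is a linear endomorphism of a vector space `V` with finite
dimensional image, then the kernel and cokernel of `1 - S` are finite dimensional of equal
dimension; in particular `ind (1 - S) = 0`. -/
theorem ker_coker_one_sub_finite_rank {K V : Type*} [Field K] [AddCommGroup V] [Module K V]
    (S : Module.End K V) (hS : FiniteDimensional K (LinearMap.range S)) :
    FiniteDimensional K (LinearMap.ker (1 - S)) ∧
    FiniteDimensional K (V ⧸ LinearMap.range (1 - S)) ∧
    Module.finrank K (LinearMap.ker (1 - S)) =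
      Module.finrank K (V ⧸ LinearMap.range (1 - S)) := by
  have hS' : ∀ x, x - (1 - S) x ∈ range S := fun x => by simp
  let eKer := kerRestrictEquivOfForallSubApplyMem hS'
  let eCoker := quotientRangeRestrictEquivOfForallSubApplyMem hS'
  refine ⟨eKer.finiteDimensional, eCoker.finiteDimensional, ?_⟩
  rw [← eKer.finrank_eq, ← eCoker.finrank_eq]
  exact finrank_ker_eq_finrank_quotient_range _
end

section
/- Let A and B be Fredholm matrices in B(K). Then AB is Fredholm and ind(AB) = ind(A) + ind(B), where ind(A) = dim ker(A) − dim coker(A) for the induced linear map on V = ⊕_{i∈ℤ⁺} K. -/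
open LinearMap

set_option synthInstance.maxHeartbeats 1000000
set_option maxHeartbeats 2000000

/-- The submodule `V_n` of finitely supported sequences vanishing below `n`. -/
def tailSubmodule (K : Type*) [Field K] (n : ℕ) : Submodule K (ℕ →₀ K) where
  carrier := {v | ∀ i < n, v i = 0}
  add_mem' := by intro a b ha hb i hi; simp [Finsupp.add_apply, ha i hi, hb i hi]
  zero_mem' := by intro i hi; simp
  smul_mem' := by intro c a ha i hi; simp [Finsupp.smul_apply, ha i hi]

/-- The algebra of "row and column finite" endomorphisms of `ℕ →₀ K`. -/
def RCFM (K : Type*) [Field K] : Subalgebra K (Module.End K (ℕ →₀ K)) where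
  carrier := {f | ∀ n, ∃ m, ∀ v ∈ tailSubmodule K m, f v ∈ tailSubmodule K n}
  mul_mem' := by
    intro f g hf hg n
    obtain ⟨m₁, h₁⟩ := hf n
    obtain ⟨m₂, h₂⟩ := hg m₁
    exact ⟨m₂, fun v hv => h₁ _ (h₂ v hv)⟩
  add_mem' := by
    intro f g hf hg n
    obtain ⟨m₁, h₁⟩ := hf n
    obtain ⟨m₂, h₂⟩ := hg n
    refine ⟨max m₁ m₂, fun v hv => ?_⟩
    have hv₁ : v ∈ tailSubmodule K m₁ := fun i hi => hv i (lt_of_lt_of_le hi (le_max_left _ _))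
    have hv₂ : v ∈ tailSubmodule K m₂ := fun i hi => hv i (lt_of_lt_of_le hi (le_max_right _ _))
    exact (tailSubmodule K n).add_mem (h₁ v hv₁) (h₂ v hv₂)
  algebraMap_mem' := by
    intro r n
    refine ⟨n, fun v hv => ?_⟩
    have : (algebraMap K (Module.End K (ℕ →₀ K)) r) v = r • v := rfl
    rw [this]
    exact (tailSubmodule K n).smul_mem r hv

/-- Finite rank endomorphisms, playing the role of `M_∞(K)`. -/
def FinRank {K : Type*} [Field K] (f : Module.End K (ℕ →₀ K)) : Prop :=
  FiniteDimensional K (LinearMap.range f)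

variable {K : Type*} [Field K]

theorem finrank_zero : FinRank (0 : Module.End K (ℕ →₀ K)) := by
  unfold FinRank
  rw [LinearMap.range_zero]
  infer_instance

theorem finrank_add {f g : Module.End K (ℕ →₀ K)} (hf : FinRank f) (hg : FinRank g) :
    FinRank (f + g) := by
  unfold FinRank at *
  haveI := hf; haveI := hg
  have hle : LinearMap.range (f + g) ≤ LinearMap.range f ⊔ LinearMap.range g := by
    rintro x ⟨v, rfl⟩
    exact Submodule.add_mem_sup (LinearMap.mem_range_self f v) (LinearMap.mem_range_self g v)
  exact Submodule.finiteDimensional_of_le hle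

theorem finrank_neg {f : Module.End K (ℕ →₀ K)} (hf : FinRank f) : FinRank (-f) := by
  unfold FinRank at *
  rwa [LinearMap.range_neg]

theorem finrank_mul_left (f : Module.End K (ℕ →₀ K)) {g : Module.End K (ℕ →₀ K)}
    (hg : FinRank g) : FinRank (f * g) := by
  unfold FinRank at *
  haveI := hg
  rw [Module.End.mul_eq_comp, LinearMap.range_comp]
  exact Module.Finite.map _ f

theorem finrank_mul_right {f : Module.End K (ℕ →₀ K)} (g : Module.End K (ℕ →₀ K))
    (hf : FinRank f) : FinRank (f * g) := by
  unfold FinRank at *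
  haveI := hf
  have hle : LinearMap.range (f * g) ≤ LinearMap.range f := by
    rintro x ⟨v, rfl⟩; exact LinearMap.mem_range_self f (g v)
  exact Submodule.finiteDimensional_of_le hle


noncomputable instance instRingRCFM (K : Type*) [Field K] : Ring (RCFM K) :=
  @Subalgebra.toRing K (Module.End K (ℕ →₀ K)) _ _ _ (RCFM K)

/-- `M_∞(K)` as a two-sided ideal of `RCFM K`. -/
noncomputable def Minf (K : Type*) [Field K] : TwoSidedIdeal (RCFM K) :=
  TwoSidedIdeal.mk' {f : RCFM K | FinRank (f : Module.End K (ℕ →₀ K))}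
    finrank_zero
    (fun hx hy => finrank_add hx hy)
    (fun hx => finrank_neg hx)
    (fun hy => finrank_mul_left _ hy)
    (fun hx => finrank_mul_right _ hx)


/-- The quotient algebra `Q(K) = RCFM(K)/M_∞(K)`. -/
abbrev QK (K : Type*) [Field K] := (Minf K).ringCon.Quotient

/-- The quotient map `π : RCFM(K) → Q(K)`. -/
noncomputable abbrev quotMap (K : Type*) [Field K] : RCFM K →+* QK K := (Minf K).ringCon.mk'

/-- The index of an endomorphism. -/
noncomputable def ind (f : Module.End K (ℕ →₀ K)) : ℤ :=
  (Module.finrank K (LinearMap.ker f) : ℤ) -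
    (Module.finrank K ((ℕ →₀ K) ⧸ LinearMap.range f) : ℤ)

/-!
An inverse `B` of `A` modulo finite-rank maps gives `ker A ≤ range (B A - 1)` and
`range A ⊔ range (A B - 1) = ⊤`, so a Fredholm matrix has finite-dimensional kernel and cokernel.
For such maps the index is additive under composition (`LinearMap.index_comp`, from the exact
sequence `0 → ker B → ker AB → ker A → coker B → coker AB → coker A → 0`).
-/

section Ring

variable {R M N : Type*} [Ring R] [AddCommGroup M] [Module R M] [AddCommGroup N] [Module R N]

theorem LinearMap.ker_le_range_comp_sub_id (f : M →ₗ[R] N) (u : N →ₗ[R] M) :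
    ker f ≤ range (u ∘ₗ f - LinearMap.id) := fun v hv =>
  ⟨-v, by simp [mem_ker.mp hv]⟩

theorem LinearMap.range_sup_range_comp_sub_id (f : M →ₗ[R] N) (u : N →ₗ[R] M) :
    range f ⊔ range (f ∘ₗ u - LinearMap.id) = ⊤ := by
  refine eq_top_iff.mpr fun v _ => ?_
  have hv : v = f (u v) - (f ∘ₗ u - LinearMap.id : N →ₗ[R] N) v := by simp
  rw [hv]
  exact sub_mem (Submodule.mem_sup_left (mem_range_self _ _))
    (Submodule.mem_sup_right (mem_range_self _ _))

theorem Submodule.finite_quotient_of_sup_eq_top {p q : Submodule R M} [Module.Finite R q]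
    (h : p ⊔ q = ⊤) : Module.Finite R (M ⧸ p) := by
  have : Module.Finite R (⊤ : Submodule R (M ⧸ p)) :=
    (p.map_mkQ_eq_top q).mpr h ▸ Module.Finite.map q p.mkQ
  exact Module.Finite.equiv Submodule.topEquiv

end Ring

theorem finRank_sub_of_quotMap_eq {A B : RCFM K} (h : quotMap K A = quotMap K B) :
    FinRank ((A - B : RCFM K) : Module.End K (ℕ →₀ K)) := by
  have hmem : A - B ∈ Minf K := ((Minf K).rel_iff A B).mp ((Minf K).ringCon.eq.mp h)
  rwa [Minf, TwoSidedIdeal.mem_mk'] at hmem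

theorem exists_finRank_mul_sub_one_of_isUnit {A : RCFM K} (hA : IsUnit (quotMap K A)) :
    ∃ B : RCFM K, FinRank ((A * B - 1 : RCFM K) : Module.End K (ℕ →₀ K)) ∧
      FinRank ((B * A - 1 : RCFM K) : Module.End K (ℕ →₀ K)) := by
  obtain ⟨u, hu⟩ := hA
  obtain ⟨B, hB⟩ := (Minf K).ringCon.mk'_surjective (↑u⁻¹ : QK K)
  refine ⟨B, finRank_sub_of_quotMap_eq ?_, finRank_sub_of_quotMap_eq ?_⟩
  · rw [map_mul, map_one, ← hu, hB, u.mul_inv]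
  · rw [map_mul, map_one, ← hu, hB, u.inv_mul]

theorem finiteDimensional_ker_of_isUnit {A : RCFM K} (hA : IsUnit (quotMap K A)) :
    FiniteDimensional K (ker (A : Module.End K (ℕ →₀ K))) := by
  obtain ⟨B, -, hBA⟩ := exists_finRank_mul_sub_one_of_isUnit hA
  set a : Module.End K (ℕ →₀ K) := ↑A
  set b : Module.End K (ℕ →₀ K) := ↑B
  have : FiniteDimensional K (range (b ∘ₗ a - LinearMap.id)) := hBA
  exact Submodule.finiteDimensional_of_le (ker_le_range_comp_sub_id a b)

theorem finiteDimensional_quotient_range_of_isUnit {A : RCFM K} (hA : IsUnit (quotMap K A)) :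
    FiniteDimensional K ((ℕ →₀ K) ⧸ range (A : Module.End K (ℕ →₀ K))) := by
  obtain ⟨B, hAB, -⟩ := exists_finRank_mul_sub_one_of_isUnit hA
  set a : Module.End K (ℕ →₀ K) := ↑A
  set b : Module.End K (ℕ →₀ K) := ↑B
  have : FiniteDimensional K (range (a ∘ₗ b - LinearMap.id)) := hAB
  exact Submodule.finite_quotient_of_sup_eq_top (range_sup_range_comp_sub_id a b)

/-- If `A` and `B` are Fredholm matrices in `B(K)` (their images in
`B(K)/M_∞(K)` are invertible), then `A * B` is Fredholm and
`ind (A * B) = ind A + ind B`. -/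
theorem fredholm_index_mul {K : Type*} [Field K] (A B : RCFM K)
    (hA : IsUnit (quotMap K A)) (hB : IsUnit (quotMap K B)) :
    IsUnit (quotMap K (A * B)) ∧
      ind ((A * B : RCFM K) : Module.End K (ℕ →₀ K)) =
        ind (A : Module.End K (ℕ →₀ K)) + ind (B : Module.End K (ℕ →₀ K)) := by
  have := finiteDimensional_ker_of_isUnit hA
  have := finiteDimensional_ker_of_isUnit hB
  have := finiteDimensional_quotient_range_of_isUnit hA
  have := finiteDimensional_quotient_range_of_isUnit hB
  refine ⟨by rw [map_mul]; exact hA.mul hB, ?_⟩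
  exact index_comp (f := (B : Module.End K (ℕ →₀ K))) (A : Module.End K (ℕ →₀ K))
end

section
/- Let K be a field of characteristic 0 and let D₂ = Diag(1, 2, 4, ..., 2^{i-1}, ...) be the diagonal ℤ⁺×ℤ⁺ matrix with (i,i) entry 2^{i-1}. Then the family {D₂ⁿ : n ∈ ℤ} is linearly independent modulo M_∞(K): any finite K-linear combination Σ kₙ D₂ⁿ that has only finitely many nonzero entries must have all coefficients kₙ = 0. -/
/-!
The diagonal of `Σₙ kₙ D₂ⁿ` is the sequence `i ↦ Σₙ kₙ (2ⁿ)ⁱ`, and finitely many nonzero entries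
means it vanishes for all `i ≥ N`. Shifting by `N`, the coefficients `kₙ (2ⁿ)ᴺ` give a vanishing
combination of the maps `j ↦ (2ⁿ)ʲ`, which are pairwise distinct characters of the monoid `ℕ`
(here characteristic zero is used); by Dedekind's independence of characters, the role played by
the Vandermonde determinant in the paper, these coefficients vanish, hence so do the `kₙ`.
-/

open Filter

theorem eq_zero_of_eventually_sum_mul_pow_eq_zero {ι K : Type*} [CommRing K] [IsDomain K]
    {s : Finset ι} {a c : ι → K} (ha : Set.InjOn a s) (ha₀ : ∀ n ∈ s, a n ≠ 0)
    (h : ∀ᶠ i in atTop, ∑ n ∈ s, c n * a n ^ i = 0) : ∀ n ∈ s, c n = 0 := by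
  obtain ⟨N, hN⟩ := eventually_atTop.1 h
  have hind : LinearIndependent K fun n : s => (powersHom K (a n) : Multiplicative ℕ → K) :=
    (linearIndependent_monoidHom _ K).comp _
      ((powersHom K).injective.comp (Set.injOn_iff_injective.1 ha))
  have hshifted :
      ∑ n : s, (c n * a n ^ N) • (powersHom K (a n) : Multiplicative ℕ → K) = 0 := by
    ext j
    simpa [Finset.sum_apply, pow_add, mul_assoc,
      Finset.sum_attach s fun n => c n * (a n ^ N * a n ^ j.toAdd)]
      using hN (N + j.toAdd) (Nat.le_add_right _ _)
  intro n hn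
  have hcn := Fintype.linearIndependent_iff.1 hind _ hshifted ⟨n, hn⟩
  exact (mul_eq_zero.1 hcn).resolve_right (pow_ne_zero _ (ha₀ n hn))

theorem natCast_zpow_injective {K : Type*} [DivisionRing K] [CharZero K] {b : ℕ} (hb : 1 < b) :
    Function.Injective fun n : ℤ => (b : K) ^ n := by
  intro m n h
  have hℚ : (b : ℚ) ^ m = (b : ℚ) ^ n := Rat.cast_injective (α := K) (by push_cast; exact h)
  exact zpow_right_injective₀ (by positivity) (by exact_mod_cast hb.ne') hℚ

/-- Over a field `K` of characteristic zero, let `D₂ⁿ` be the diagonal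
`ℤ⁺ × ℤ⁺` matrix whose `(i,i)` entry is `(2ⁿ)ⁱ` (indices starting at `0`, `n ∈ ℤ`).  The family
`{D₂ⁿ : n ∈ ℤ}` is linearly independent modulo `M_∞(K)`: if a finite linear combination
`Σₙ kₙ D₂ⁿ` has only finitely many nonzero entries, then all coefficients vanish. -/
theorem diag_powers_linearly_independent_mod_Minf {K : Type*} [Field K] [CharZero K]
    (s : Finset ℤ) (k : ℤ → K)
    (hfin : {p : ℕ × ℕ |
      (∑ n ∈ s, k n * (if p.1 = p.2 then ((2 : K) ^ n) ^ p.1 else 0)) ≠ 0}.Finite) :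
    ∀ n ∈ s, k n = 0 := by
  have hdiag : {i : ℕ | ∑ n ∈ s, k n * ((2 : K) ^ n) ^ i ≠ 0}.Finite := by
    refine (hfin.preimage (f := fun i => (i, i)) fun i _ j _ h => congrArg Prod.fst h).subset ?_
    intro i hi
    simpa using hi
  have hinj : Function.Injective fun n : ℤ => (2 : K) ^ n := by
    exact_mod_cast natCast_zpow_injective (K := K) one_lt_two
  refine eq_zero_of_eventually_sum_mul_pow_eq_zero hinj.injOn
    (fun n _ => zpow_ne_zero n two_ne_zero) ?_
  rw [← Nat.cofinite_eq_atTop]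
  simpa using hdiag.eventually_cofinite_notMem
end
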